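/- Fix n ≥ 2, a ∈ (0,1), d > 0. Suppose u, v ∈ ℝⁿ satisfy G(u; a, d) = G(v; a, d) = 0 where G(w)_i = d(w_{i-1} - 2w_i + w_{i+1}) + g(w_i, a) with cyclic indices. If u ≤ v componentwise and u_i = v_i for some index i, then u = v. -/

import Mathlib

noncomputable section

/-- The cubic nonlinearity of the Nagumo equation. -/
def g (u a : ℝ) : ℝ := u * (1 - u) * (u - a)

/-- The `n`-periodic Nagumo equilibrium map, with cyclic indices. -/
def G (n : ℕ) [NeZero n] (a d : ℝ) (u : Fin n → ℝ) : Fin n → ℝ :=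
  fun i => d * (u (i - 1) - 2 * u i + u (i + 1)) + g (u i) a

/-! At a contact point `u k = v k` of two ordered equilibria the reaction terms cancel, so the
equation leaves `d * ((u - v) (k - 1) + (u - v) (k + 1)) = 0` with both summands nonpositive:
the contact spreads to the neighbours, and hence around the whole cycle. -/

open Fin.NatCast in
theorem Fin.cyclic_induction {n : ℕ} [NeZero n] {P : Fin n → Prop} {i : Fin n} (hi : P i)
    (step : ∀ k, P k → P (k + 1)) (j : Fin n) : P j := by
  have shift : ∀ m : ℕ, P (i + m) := by
    intro m
    induction m with
    | zero => simpa using hi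
    | succ m ih => simpa [add_assoc] using step _ ih
  simpa using shift (j - i).val

theorem G_sub_G_of_eq {n : ℕ} [NeZero n] {a d : ℝ} {u v : Fin n → ℝ} {k : Fin n}
    (hk : u k = v k) :
    G n a d u k - G n a d v k = d * ((u (k - 1) - v (k - 1)) + (u (k + 1) - v (k + 1))) := by
  simp only [G, hk]
  ring

theorem eq_succ_of_eq_of_le {n : ℕ} [NeZero n] {a d : ℝ} (hd : 0 < d) {u v : Fin n → ℝ}
    (hu : G n a d u = 0) (hv : G n a d v = 0) (hle : u ≤ v) {k : Fin n} (hk : u k = v k) :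
    u (k + 1) = v (k + 1) := by
  have hsum : d * ((u (k - 1) - v (k - 1)) + (u (k + 1) - v (k + 1))) = 0 := by
    rw [← G_sub_G_of_eq hk, hu, hv, sub_self]
  linarith [(mul_eq_zero.mp hsum).resolve_left hd.ne', hle (k - 1), hle (k + 1)]

theorem ordered_equilibria_agree_general (n : ℕ) [NeZero n] (a d : ℝ)
    (hd : 0 < d) (u v : Fin n → ℝ)
    (hu : G n a d u = 0) (hv : G n a d v = 0) (hle : u ≤ v)
    (i : Fin n) (heq : u i = v i) : u = v :=
  funext (Fin.cyclic_induction heq fun _ hk => eq_succ_of_eq_of_le hd hu hv hle hk)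

theorem ordered_equilibria_agree (n : ℕ) [NeZero n] (hn : 2 ≤ n) (a d : ℝ)
    (ha : a ∈ Set.Ioo (0 : ℝ) 1) (hd : 0 < d) (u v : Fin n → ℝ)
    (hu : G n a d u = 0) (hv : G n a d v = 0) (hle : u ≤ v)
    (i : Fin n) (heq : u i = v i) : u = v :=
  ordered_equilibria_agree_general n a d hd u v hu hv hle i heq
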